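/- If φ: I → ℝ is a smooth function on an open interval I with φ' nowhere zero and the Schwarzian derivative S(φ) = 0 on I, then there exist real numbers a, b, c, d with ad - bc ≠ 0 such that φ(x) = (ax+b)/(cx+d) for all x in I. -/

import Mathlib

private lemma aux_const {I : Set ℝ} (hI : IsOpen I) (hconv : Convex ℝ I) {f : ℝ → ℝ}
    (hf : ∀ x ∈ I, HasDerivAt f 0 x) {x y : ℝ} (hx : x ∈ I) (hy : y ∈ I) : f x = f y := by
  refine hconv.is_const_of_fderivWithin_eq_zero
    (fun z hz => ((hf z hz).differentiableAt).differentiableWithinAt) (fun z hz => ?_) hx hy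
  rw [fderivWithin_of_isOpen hI hz, (hf z hz).hasFDerivAt.fderiv]
  ext
  simp

noncomputable def schwarzian (f : ℝ → ℝ) (x : ℝ) : ℝ :=
  deriv (deriv (deriv f)) x / deriv f x - (3 / 2) * (deriv (deriv f) x / deriv f x) ^ 2

theorem schwarzian_zero_implies_homography (I : Set ℝ) (hI : IsOpen I)
    (hconn : I.OrdConnected) (φ : ℝ → ℝ)
    (hsmooth : ContDiffOn ℝ (⊤ : ℕ∞) φ I)
    (hderiv : ∀ x ∈ I, deriv φ x ≠ 0)
    (hS : ∀ x ∈ I, schwarzian φ x = 0) :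
    ∃ a b c d : ℝ, a * d - b * c ≠ 0 ∧ ∀ x ∈ I, φ x = (a * x + b) / (c * x + d) := by
  rcases Set.eq_empty_or_nonempty I with hIe | ⟨x₀, hx₀⟩
  · exact ⟨1, 0, 0, 1, by norm_num, fun x hx => by
      rw [hIe] at hx; exact absurd hx (Set.notMem_empty x)⟩
  have hconv : Convex ℝ I := convex_iff_ordConnected.mpr hconn
  -- differentiability of the derivatives
  have hψ : ContDiffOn ℝ (⊤ : ℕ∞) (deriv φ) I := hsmooth.deriv_of_isOpen hI (by simp)
  have hχ : ContDiffOn ℝ (⊤ : ℕ∞) (deriv (deriv φ)) I := hψ.deriv_of_isOpen hI (by simp)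
  have h1 : ∀ x ∈ I, HasDerivAt φ (deriv φ x) x := fun x hx =>
    ((hsmooth.differentiableOn (by norm_num) x hx).differentiableAt (hI.mem_nhds hx)).hasDerivAt
  have h2 : ∀ x ∈ I, HasDerivAt (deriv φ) (deriv (deriv φ) x) x := fun x hx =>
    ((hψ.differentiableOn (by norm_num) x hx).differentiableAt (hI.mem_nhds hx)).hasDerivAt
  have h3 : ∀ x ∈ I, HasDerivAt (deriv (deriv φ)) (deriv (deriv (deriv φ)) x) x := fun x hx =>
    ((hχ.differentiableOn (by norm_num) x hx).differentiableAt (hI.mem_nhds hx)).hasDerivAt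
  -- the sign of the derivative is constant on I
  have hkey : ∀ x ∈ I, (0 < deriv φ x ↔ 0 < deriv φ x₀) := by
    intro x hx
    by_contra hcon
    have hcont : ContinuousOn (deriv φ) (Set.uIcc x₀ x) :=
      (hψ.continuousOn).mono (hconn.uIcc_subset hx₀ hx)
    have h0 : (0 : ℝ) ∈ Set.uIcc (deriv φ x₀) (deriv φ x) := by
      rcases lt_or_gt_of_ne (hderiv x hx) with hxneg | hxpos
      · have hpos₀ : 0 < deriv φ x₀ := by
          rcases lt_or_gt_of_ne (hderiv x₀ hx₀) with h | h
          · exact absurd (iff_of_false (asymm hxneg ∘ fun h' => h') (not_lt.mpr h.le))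
              (fun hh => hcon (by tauto))
          · exact h
        exact Set.mem_uIcc.mpr (Or.inr ⟨hxneg.le, hpos₀.le⟩)
      · have hneg₀ : deriv φ x₀ < 0 := by
          rcases lt_or_gt_of_ne (hderiv x₀ hx₀) with h | h
          · exact h
          · exact absurd (iff_of_true hxpos h) hcon
        exact Set.mem_uIcc.mpr (Or.inl ⟨hneg₀.le, hxpos.le⟩)
    obtain ⟨y, hy, hy0⟩ := intermediate_value_uIcc hcont h0
    exact hderiv y (hconn.uIcc_subset hx₀ hx hy) hy0
  obtain ⟨s, hs1, hpos⟩ : ∃ s : ℝ, (s = 1 ∨ s = -1) ∧ ∀ x ∈ I, 0 < s * deriv φ x := by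
    by_cases h : 0 < deriv φ x₀
    · exact ⟨1, Or.inl rfl, fun x hx => by rw [one_mul]; exact (hkey x hx).mpr h⟩
    · refine ⟨-1, Or.inr rfl, fun x hx => ?_⟩
      have hneg : deriv φ x < 0 := by
        rcases lt_or_gt_of_ne (hderiv x hx) with h' | h'
        · exact h'
        · exact absurd ((hkey x hx).mp h') h
      nlinarith
  have hs2 : s ^ 2 = 1 := by rcases hs1 with h | h <;> rw [h] <;> norm_num
  have hsne : s ≠ 0 := by rcases hs1 with h | h <;> rw [h] <;> norm_num
  -- the function u = (s·φ')^{-1/2} and its derivative F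
  set u : ℝ → ℝ := fun x => (Real.sqrt (s * deriv φ x))⁻¹ with hu_def
  set F : ℝ → ℝ := fun x =>
    -(s * deriv (deriv φ) x) / (2 * Real.sqrt (s * deriv φ x) ^ 3) with hF_def
  have hgpos : ∀ x ∈ I, 0 < Real.sqrt (s * deriv φ x) := fun x hx =>
    Real.sqrt_pos.mpr (hpos x hx)
  have hu : ∀ x ∈ I, HasDerivAt u (F x) x := by
    intro x hx
    have hgne := (hgpos x hx).ne'
    have hsq : HasDerivAt (fun y => s * deriv φ y) (s * deriv (deriv φ) x) x :=
      (h2 x hx).const_mul s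
    have hg : HasDerivAt (fun y => Real.sqrt (s * deriv φ y))
        (s * deriv (deriv φ) x / (2 * Real.sqrt (s * deriv φ x))) x :=
      hsq.sqrt (hpos x hx).ne'
    have hinv := hg.inv hgne
    convert hinv using 1
    · rfl
    · rfl
    · rfl
    rw [hF_def]
    field_simp
  have hF0 : ∀ x ∈ I, HasDerivAt F 0 x := by
    intro x hx
    have hp : deriv φ x ≠ 0 := hderiv x hx
    have hgne := (hgpos x hx).ne'
    have hg2 : Real.sqrt (s * deriv φ x) ^ 2 = s * deriv φ x :=
      Real.sq_sqrt (hpos x hx).le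
    have hrel : deriv (deriv (deriv φ)) x * deriv φ x = 3 / 2 * deriv (deriv φ) x ^ 2 := by
      have h := hS x hx
      unfold schwarzian at h
      field_simp at h
      apply mul_left_cancel₀ hp
      linear_combination deriv φ x * h / 2
    have hN : HasDerivAt (fun y => -(s * deriv (deriv φ) y))
        (-(s * deriv (deriv (deriv φ)) x)) x := ((h3 x hx).const_mul s).neg
    have hsq : HasDerivAt (fun y => s * deriv φ y) (s * deriv (deriv φ) x) x :=
      (h2 x hx).const_mul s
    have hg : HasDerivAt (fun y => Real.sqrt (s * deriv φ y))
        (s * deriv (deriv φ) x / (2 * Real.sqrt (s * deriv φ x))) x :=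
      hsq.sqrt (hpos x hx).ne'
    have hD := (hg.pow 3).const_mul 2
    have hDne : 2 * Real.sqrt (s * deriv φ x) ^ 3 ≠ 0 :=
      mul_ne_zero two_ne_zero (pow_ne_zero 3 hgne)
    have hdiv := hN.div hD hDne
    convert hdiv using 1
    · rfl
    · rfl
    · rfl
    rw [eq_comm, div_eq_zero_iff]
    left
    field_simp
    simp only [Pi.pow_apply]
    linear_combination (-2 * s * deriv (deriv (deriv φ)) x * Real.sqrt (s * deriv φ x) ^ 2) * hg2
      + (-2 * s ^ 2 * Real.sqrt (s * deriv φ x) ^ 2) * hrel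
  -- F is constant, hence u is affine on I
  obtain ⟨c, hFc⟩ : ∃ c : ℝ, ∀ x ∈ I, F x = c :=
    ⟨F x₀, fun x hx => aux_const hI hconv hF0 hx hx₀⟩
  have huc : ∀ x ∈ I, HasDerivAt (fun y => u y - c * y) 0 x := by
    intro x hx
    have h := (hu x hx).sub ((hasDerivAt_id x).const_mul c)
    exact h.congr_deriv (by simp [hFc x hx])
  obtain ⟨d, hud'⟩ : ∃ d : ℝ, ∀ x ∈ I, u x - c * x = d :=
    ⟨u x₀ - c * x₀, fun x hx => aux_const hI hconv huc hx hx₀⟩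
  have hud : ∀ x ∈ I, u x = c * x + d := fun x hx => by linarith [hud' x hx]
  have hline : ∀ x ∈ I, 0 < c * x + d := by
    intro x hx
    rw [← hud x hx]
    exact inv_pos.mpr (hgpos x hx)
  have hphider : ∀ x ∈ I, deriv φ x = s / (c * x + d) ^ 2 := by
    intro x hx
    have hg2 : Real.sqrt (s * deriv φ x) ^ 2 = s * deriv φ x :=
      Real.sq_sqrt (hpos x hx).le
    have hsqrt_eq : Real.sqrt (s * deriv φ x) = (c * x + d)⁻¹ := by
      rw [← hud x hx, hu_def, inv_inv]
    rw [hsqrt_eq, inv_pow] at hg2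
    rw [div_eq_mul_inv]
    linear_combination s * hg2.symm - deriv φ x * hs2
  by_cases hc0 : c = 0
  · -- affine case
    have hdpos : 0 < d := by have h := hline x₀ hx₀; rw [hc0] at h; simpa using h
    have haff : ∀ x ∈ I, HasDerivAt (fun y => φ y - s / d ^ 2 * y) 0 x := by
      intro x hx
      have h := (h1 x hx).sub ((hasDerivAt_id x).const_mul (s / d ^ 2))
      have hder : deriv φ x = s / d ^ 2 := by rw [hphider x hx, hc0]; norm_num
      exact h.congr_deriv (by simp [hder])
    refine ⟨s / d ^ 2, φ x₀ - s / d ^ 2 * x₀, 0, 1, ?_, ?_⟩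
    · simpa using div_ne_zero hsne (pow_ne_zero 2 hdpos.ne')
    · intro x hx
      have h := aux_const hI hconv haff hx hx₀
      have hx' : φ x = s / d ^ 2 * x + (φ x₀ - s / d ^ 2 * x₀) := by linarith
      rw [hx']
      norm_num
  · -- Möbius case
    obtain ⟨k, hk_def⟩ : ∃ k : ℝ, k = φ x₀ + s * (c * (c * x₀ + d))⁻¹ := ⟨_, rfl⟩
    have hM : ∀ x ∈ I, HasDerivAt (fun y => φ y - (k - s * (c * (c * y + d))⁻¹)) 0 x := by
      intro x hx
      have hlx := (hline x hx).ne'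
      have hne : c * (c * x + d) ≠ 0 := mul_ne_zero hc0 hlx
      have hlin : HasDerivAt (fun y => c * (c * y + d)) (c * c) x := by
        have h := (((hasDerivAt_id x).const_mul c).add_const d).const_mul c
        simpa using h
      have hMd := ((hlin.inv hne).const_mul s).const_sub k
      have hdiff := (h1 x hx).sub hMd
      convert hdiff using 1
      · rfl
      · rfl
      · rfl
      rw [hphider x hx, eq_comm, sub_eq_zero]
      field_simp
    refine ⟨k * c, k * d - s / c, c, d, ?_, ?_⟩
    · have hdet : k * c * d - (k * d - s / c) * c = s := by field_simp; ring
      rw [hdet]; exact hsne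
    · intro x hx
      have hlx := (hline x hx).ne'
      have heq := aux_const hI hconv hM hx hx₀
      have hx₀eq : φ x₀ - (k - s * (c * (c * x₀ + d))⁻¹) = 0 := by rw [hk_def]; ring
      rw [hx₀eq, sub_eq_zero] at heq
      rw [heq]
      field_simp
      ring
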